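/- Let q be a prime power, let 0 < k', k ≤ n, let U₀ = rs[ I_{k'} | 0_{k'×(n−k')} ], and let t satisfy |k' − k| ≤ t < min(max(k',k), n − k + 1). Then for every k×n matrix V over F_q of rank k, the subspace rs(V) satisfies d_I(U₀, rs(V)) ≤ t if and only if M_{i₁,…,i_k}(V) = 0 for every index tuple (i₁ < … < i_k) that is NOT ⪯ (k' − max(k',k) + t + 1, …, k', n − k + max(k',k) − t + 1, …, n) in the Bruhat order; equivalently, if and only if every k×k minor of V whose column set contains at least min(0, k − k') + t + 1 columns with index greater than k' vanishes. -/

import Mathlib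

/-- The standard subspace `U₀ = rs [I_{k'} | 0]`, spanned by the first `k'`
standard basis vectors of `F^n`. -/
def stdSubspace (F : Type*) [Field F] (n k' : ℕ) (h : k' ≤ n) :
    Submodule F (Fin n → F) :=
  Submodule.span F
    (Set.range fun i : Fin k' => (Pi.single (Fin.castLE h i) (1 : F) : Fin n → F))

def rowSpace (F : Type*) [Field F] {k n : ℕ} (M : Matrix (Fin k) (Fin n) F) :
    Submodule F (Fin n → F) :=
  Submodule.span F (Set.range fun i : Fin k => M i)

/-!
Let `π` restrict vectors to the coordinates `j ≥ k'`, so that `U₀ = ker π`, and let `B` be the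
block of the columns `j ≥ k'` of `V`. Then `π (rs V) = rs B`, hence `dim (U₀ ∩ rs V) = k - rank B`
and `d_I(U₀, rs V) = max(k', k) - k + rank B`: the distance bound is a rank bound on `B`.
Since the columns of `V` span `F^k`, `rank B > r` holds exactly when `r + 1` independent columns
of `B` extend to `k` independent columns of `V`, i.e. to a nonzero `k × k` minor with at least
`r + 1` columns beyond `k'`.
-/

open Module Submodule Matrix

section Minors

open Finset

variable {K : Type*} [Field K] {ι : Type*} [Fintype ι] (p : ι → Prop) [DecidablePred p]

theorem card_filter_le_rank_submatrix_of_det_ne_zero {m : Type*} [Fintype m] [DecidableEq m]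
    (V : Matrix m ι K) (c : m → ι) (hc : (V.submatrix id c).det ≠ 0) :
    #{l | p (c l)} ≤ (V.submatrix id (Subtype.val : {j // p j} → ι)).rank := by
  have hcols : LinearIndependent K (V.submatrix id c).col :=
    linearIndependent_cols_iff_isUnit.mpr ((isUnit_iff_isUnit_det _).mpr hc.isUnit)
  have hsub := hcols.comp (Subtype.val : {l // p (c l)} → m) Subtype.val_injective
  rw [rank_eq_finrank_span_cols, ← Fintype.card_subtype, ← finrank_span_eq_card hsub]
  refine Submodule.finrank_mono (span_mono ?_)
  rintro _ ⟨⟨l, hl⟩, rfl⟩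
  exact ⟨⟨c l, hl⟩, rfl⟩

theorem exists_strictMono_det_ne_zero_rank_submatrix_le [LinearOrder ι] {k : ℕ}
    (V : Matrix (Fin k) ι K) (hV : V.rank = k) :
    ∃ c : Fin k → ι, StrictMono c ∧ (V.submatrix id c).det ≠ 0 ∧
      (V.submatrix id (Subtype.val : {j // p j} → ι)).rank ≤ #{l | p (c l)} := by
  classical
  obtain ⟨J, hJp, -, hpJ, hJ⟩ :=
    exists_linearIndepOn_extension (linearIndepOn_empty K V.col) (Set.empty_subset {j | p j})
  obtain ⟨I, -, hJI, hI_span, hI⟩ := exists_linearIndepOn_extension hJ (Set.subset_univ J)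
  have hI_card : #I.toFinset = k := by
    have hspan : span K (V.col '' I) = span K (Set.range V.col) :=
      le_antisymm (span_mono (Set.image_subset_range _ _))
        (span_le.mpr (by rwa [← Set.image_univ]))
    rw [Set.toFinset_card, ← finrank_span_eq_card hI, ← Set.image_eq_range, hspan,
      ← rank_eq_finrank_span_cols, hV]
  set c := I.toFinset.orderEmbOfFin hI_card
  have hcI : ∀ l, c l ∈ I := fun l =>
    Set.mem_toFinset.mp (I.toFinset.orderEmbOfFin_mem hI_card l)
  refine ⟨c, c.strictMono, ?_, ?_⟩
  · have hcols : LinearIndependent K (V.submatrix id c).col :=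
      hI.comp (fun l => ⟨c l, hcI l⟩) (.of_comp (f := Subtype.val) c.injective)
    exact ((isUnit_iff_isUnit_det _).mp (linearIndependent_cols_iff_isUnit.mp hcols)).ne_zero
  · have hJ_card : #J.toFinset ≤ #{l | p (c l)} :=
      calc #J.toFinset ≤ #(I.toFinset.filter p) := card_le_card fun j hj =>
            mem_filter.mpr ⟨Set.mem_toFinset.mpr (hJI (Set.mem_toFinset.mp hj)),
              hJp (Set.mem_toFinset.mp hj)⟩
        _ = #{l | p (c l)} := by
            rw [← image_orderEmbOfFin_univ I.toFinset hI_card, filter_image,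
              card_image_of_injective _ c.injective]
    calc (V.submatrix id (Subtype.val : {j // p j} → ι)).rank
        ≤ finrank K (span K (V.col '' J)) := by
          rw [rank_eq_finrank_span_cols]
          refine Submodule.finrank_mono (span_le.mpr ?_)
          rintro _ ⟨j, rfl⟩
          exact hpJ ⟨j, j.2, rfl⟩
      _ ≤ #J.toFinset := by
          rw [Set.image_eq_range, Set.toFinset_card]; exact finrank_range_le_card _
      _ ≤ #{l | p (c l)} := hJ_card

theorem rank_submatrix_le_iff_forall_det_eq_zero [LinearOrder ι] {k : ℕ}
    (V : Matrix (Fin k) ι K) (hV : V.rank = k) (r : ℕ) :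
    (V.submatrix id (Subtype.val : {j // p j} → ι)).rank ≤ r ↔
      ∀ c : Fin k → ι, StrictMono c → r + 1 ≤ #{l | p (c l)} → (V.submatrix id c).det = 0 := by
  constructor
  · intro hr c _ hc
    by_contra hdet
    have := card_filter_le_rank_submatrix_of_det_ne_zero p V c hdet
    omega
  · intro hminors
    obtain ⟨c, hc, hdet, hrank⟩ := exists_strictMono_det_ne_zero_rank_submatrix_le p V hV
    by_contra hr
    exact hdet (hminors c hc (by omega))

end Minors

theorem Submodule.finrank_inf_ker_add_finrank_map {K M N : Type*} [Field K] [AddCommGroup M]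
    [Module K M] [AddCommGroup N] [Module K N] (W : Submodule K M) [FiniteDimensional K W]
    (f : M →ₗ[K] N) : finrank K ↥(W ⊓ LinearMap.ker f) + finrank K ↥(W.map f) = finrank K W := by
  have h := (f.domRestrict W).finrank_range_add_finrank_ker
  rw [LinearMap.range_domRestrict, LinearMap.ker_domRestrict,
    (equivMapOfInjective _ W.injective_subtype (comap W.subtype (LinearMap.ker f))).finrank_eq,
    map_comap_subtype] at h
  omega

section RowSpace

variable {F : Type*} [Field F]

theorem finrank_rowSpace {k n : ℕ} (M : Matrix (Fin k) (Fin n) F) :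
    finrank F (rowSpace F M) = M.rank :=
  (rank_eq_finrank_span_row M).symm

theorem finrank_map_funLeft_rowSpace {k n : ℕ} {ι : Type*} [Fintype ι]
    (M : Matrix (Fin k) (Fin n) F) (c : ι → Fin n) :
    finrank F ((rowSpace F M).map (LinearMap.funLeft F F c)) = (M.submatrix id c).rank := by
  rw [rowSpace, map_span, ← Set.range_comp, rank_eq_finrank_span_row]
  rfl

theorem finrank_stdSubspace (n k' : ℕ) (h : k' ≤ n) : finrank F (stdSubspace F n k' h) = k' := by
  have hli : LinearIndependent F
      fun i : Fin k' => (Pi.single (Fin.castLE h i) (1 : F) : Fin n → F) := by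
    simpa [Function.comp_def] using
      (Pi.basisFun F (Fin n)).linearIndependent.comp _ (Fin.castLE_injective h)
  rw [stdSubspace, finrank_span_eq_card hli, Fintype.card_fin]

theorem stdSubspace_eq_ker_funLeft (n k' : ℕ) (h : k' ≤ n) :
    stdSubspace F n k' h =
      LinearMap.ker
        (LinearMap.funLeft F F (Subtype.val : {j : Fin n // k' ≤ (j : ℕ)} → Fin n)) := by
  classical
  apply le_antisymm
  · rw [stdSubspace, span_le]
    rintro _ ⟨i, rfl⟩
    ext ⟨j, hj⟩
    have hne : j ≠ Fin.castLE h i := fun hji => by have := i.isLt; simp [hji] at hj; omega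
    simp [LinearMap.funLeft_apply, hne]
  · intro x hx
    rw [pi_eq_sum_univ x]
    refine sum_mem fun j _ => ?_
    by_cases hj : k' ≤ (j : ℕ)
    · rw [show x j = 0 from congrFun hx ⟨j, hj⟩, zero_smul]
      exact zero_mem _
    · refine smul_mem _ _ (subset_span ⟨⟨j, by omega⟩, ?_⟩)
      ext i
      simp [Pi.single_apply, eq_comm]

end RowSpace

theorem statement8_general (F : Type*) [Field F] (n k k' t : ℕ)
    (hk'n : k' ≤ n)
    (ht2 : (k' : ℤ) - (k : ℤ) ≤ (t : ℤ))
    (V : Matrix (Fin k) (Fin n) F) (hV : V.rank = k) :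
    (max (Module.finrank F ↥(stdSubspace F n k' hk'n) : ℤ)
          (Module.finrank F ↥(rowSpace F V))
        - Module.finrank F ↥(stdSubspace F n k' hk'n ⊓ rowSpace F V)
      ≤ (t : ℤ))
    ↔ ∀ c : Fin k → Fin n, StrictMono c →
        (t - (k' - k)) + 1 ≤
          (Finset.univ.filter fun l : Fin k => k' ≤ (c l : ℕ)).card →
        (V.submatrix id c).det = 0 := by
  have hdim := (rowSpace F V).finrank_inf_ker_add_finrank_map
    (LinearMap.funLeft F F (Subtype.val : {j : Fin n // k' ≤ (j : ℕ)} → Fin n))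
  rw [inf_comm, ← stdSubspace_eq_ker_funLeft n k' hk'n, finrank_map_funLeft_rowSpace,
    finrank_rowSpace, hV] at hdim
  rw [finrank_stdSubspace, finrank_rowSpace, hV,
    ← rank_submatrix_le_iff_forall_det_eq_zero (fun j : Fin n => k' ≤ (j : ℕ)) V hV]
  omega

/-- Theorem 4 (injection distance): for `U₀ = rs[I_{k'} | 0]` and
`|k'-k| ≤ t < min(max(k',k), n-k+1)`, a rank-`k` matrix `V`
satisfies `d_I(U₀, rs V) ≤ t` iff every `k×k` minor of `V` whose column set
contains at least `min(0, k-k') + t + 1` columns with index greater than `k'`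
vanishes (equivalently, iff `M_{i₁,…,i_k}(V) = 0` for every tuple which is not
`⪯ (k'-max(k',k)+t+1, …, k', n-k+max(k',k)-t+1, …, n)` in the Bruhat order). -/
theorem statement8 (F : Type*) [Field F] [Fintype F] (n k k' t : ℕ)
    (hk : 0 < k) (hk' : 0 < k') (hkn : k ≤ n) (hk'n : k' ≤ n)
    (ht1 : (k : ℤ) - (k' : ℤ) ≤ (t : ℤ)) (ht2 : (k' : ℤ) - (k : ℤ) ≤ (t : ℤ))
    (ht3 : (t : ℤ) < min (max (k' : ℤ) (k : ℤ)) ((n : ℤ) - (k : ℤ) + 1))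
    (V : Matrix (Fin k) (Fin n) F) (hV : V.rank = k) :
    (max (Module.finrank F ↥(stdSubspace F n k' hk'n) : ℤ)
          (Module.finrank F ↥(rowSpace F V))
        - Module.finrank F ↥(stdSubspace F n k' hk'n ⊓ rowSpace F V)
      ≤ (t : ℤ))
    ↔ ∀ c : Fin k → Fin n, StrictMono c →
        (t - (k' - k)) + 1 ≤
          (Finset.univ.filter fun l : Fin k => k' ≤ (c l : ℕ)).card →
        (V.submatrix id c).det = 0 :=
  statement8_general F n k k' t hk'n ht2 V hV
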